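/- Suppose the conditional common trend assumption holds given covariates X, i.e. E[Y_1(0) − Y_0(0) | X, D=1] = E[Y_1(0) − Y_0(0) | X, D=0] (a common measurable function of X is a version of both conditional expectations), the no-anticipation assumption Y_0(1) = Y_0(0) holds almost surely, the common support condition P(D=1 | X) < 1 holds almost surely, and outcomes obey the observational rule Y_t = D·Y_t(1) + (1−D)·Y_t(0). Then the ATET is identified by the covariate-adjusted difference-in-differences: E[Y_1(1) − Y_1(0) | D=1] = E[Y_1 | D=1] − E[Y_0 | D=1] − E[ E[Y_1 | X, D=0] − E[Y_0 | X, D=0] | D=1 ]. -/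

import Mathlib

/-!
On the controls, `m1 X - m0 X` is a version of `E[Y₁(0) - Y₀(0) | X, D = 0]`, hence equals
`mct X`. Common support makes the law of `X` among the treated absolutely continuous with respect
to its law among the controls: for a `σ(X)`-measurable `S`,
`∫_S (1 - P(D = 1 | X)) = P(S ∩ {D = 0})`, so a set of `X`-values missed by the controls is null.
The equality `m1 X - m0 X = mct X` thus carries over to the treated, where integrating `mct X`
gives `E[Y₁(0) - Y₀(0) | D = 1]` by the tower property.
-/

open MeasureTheory ProbabilityTheory

section

variable {Ω : Type*}

theorem MeasureTheory.Integrable.cond [MeasurableSpace Ω] {μ : Measure Ω} {E : Type*}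
    [NormedAddCommGroup E] {f : Ω → E} (hf : Integrable f μ) (s : Set Ω) :
    Integrable f μ[|s] := by
  by_cases hs : μ s = 0
  · simp [cond_eq_zero_of_meas_eq_zero hs]
  · exact hf.restrict.smul_measure (ENNReal.inv_ne_top.2 hs)

theorem measure_eq_zero_of_measure_sdiff_eq_zero_of_condExp_lt_one
    {m m₀ : MeasurableSpace Ω} {μ : Measure[m₀] Ω} [IsFiniteMeasure μ] (hm : m ≤ m₀)
    {A S : Set Ω} (hA : MeasurableSet A) (hS : MeasurableSet[m] S)
    (hlt : ∀ᵐ ω ∂μ, μ[A.indicator (1 : Ω → ℝ) | m] ω < 1) (hSA : μ (S \ A) = 0) :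
    μ S = 0 := by
  set f := μ[A.indicator (1 : Ω → ℝ) | m]
  have hind : Integrable (A.indicator (1 : Ω → ℝ)) μ := (integrable_const 1).indicator hA
  have hint : ∫ ω in S, (1 - f ω) ∂μ = 0 := by
    rw [integral_sub (integrable_const 1).integrableOn integrable_condExp.integrableOn,
      setIntegral_condExp hm hind hS, setIntegral_indicator hA, Pi.one_def, setIntegral_const,
      setIntegral_const, ← measureReal_inter_add_sdiff (s := S) hA,
      (measureReal_eq_zero_iff).2 hSA, add_zero, sub_self]
  have hzero : (fun ω => 1 - f ω) =ᵐ[μ.restrict S] 0 := by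
    refine (setIntegral_eq_zero_iff_of_nonneg_ae ?_
      ((integrable_const 1).sub integrable_condExp).integrableOn).1 hint
    filter_upwards [ae_restrict_of_ae hlt] with ω h
    exact sub_nonneg.2 h.le
  have hfalse : ∀ᵐ _ ∂μ.restrict S, False := by
    filter_upwards [hzero, ae_restrict_of_ae hlt] with ω h0 h1
    simp only [Pi.zero_apply, sub_eq_zero] at h0
    linarith
  rwa [Filter.eventually_false_iff_eq_bot, ae_eq_bot, Measure.restrict_eq_zero] at hfalse

theorem sub_ae_eq_condExp_sub {m m₀ : MeasurableSpace Ω} {ν : Measure[m₀] Ω}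
    {f₁ f₀ g₁ g₀ : Ω → ℝ} (hf₁ : Integrable f₁ ν) (hf₀ : Integrable f₀ ν)
    (h₁ : g₁ =ᵐ[ν] ν[f₁ | m]) (h₀ : g₀ =ᵐ[ν] ν[f₀ | m]) :
    g₁ - g₀ =ᵐ[ν] ν[f₁ - f₀ | m] :=
  (h₁.sub h₀).trans (condExp_sub hf₁ hf₀ m).symm

theorem map_cond_absolutelyContinuous_map_cond_compl_of_condExp_lt_one
    {𝓧 : Type*} [MeasurableSpace Ω] [MeasurableSpace 𝓧] {μ : Measure Ω} [IsFiniteMeasure μ]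
    {X : Ω → 𝓧} (hX : Measurable X) {A : Set Ω} (hA : MeasurableSet A)
    (hlt : ∀ᵐ ω ∂μ, μ[A.indicator (1 : Ω → ℝ) | MeasurableSpace.comap X inferInstance] ω < 1) :
    (μ[|A]).map X ≪ (μ[|Aᶜ]).map X := by
  refine Measure.AbsolutelyContinuous.mk fun N hN hN0 => ?_
  rw [Measure.map_apply hX hN, cond_apply hA.compl] at hN0
  have hSA : μ (X ⁻¹' N \ A) = 0 := by
    rw [Set.sdiff_eq_compl_inter]
    exact (mul_eq_zero.1 hN0).resolve_left (ENNReal.inv_ne_zero.2 (measure_ne_top μ _))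
  rw [Measure.map_apply hX hN]
  exact cond_absolutelyContinuous <|
    measure_eq_zero_of_measure_sdiff_eq_zero_of_condExp_lt_one hX.comap_le hA ⟨N, hN, rfl⟩ hlt hSA

theorem ae_comp_of_map_absolutelyContinuous {𝓧 : Type*} [MeasurableSpace Ω] [MeasurableSpace 𝓧]
    {ν ρ : Measure Ω} {X : Ω → 𝓧} (hX : Measurable X) (hνρ : ν.map X ≪ ρ.map X)
    {P : 𝓧 → Prop} (hP : MeasurableSet {x | P x}) (h : ∀ᵐ ω ∂ρ, P (X ω)) :
    ∀ᵐ ω ∂ν, P (X ω) :=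
  ae_of_ae_map hX.aemeasurable (hνρ.ae_le ((ae_map_iff hX.aemeasurable hP).2 h))

end

theorem conditional_did_identifies_atet_general
    {Ω 𝓧 : Type*} [MeasurableSpace Ω] [MeasurableSpace 𝓧]
    (μ : Measure Ω) [IsProbabilityMeasure μ]
    (D Y0d0 Y0d1 Y1d0 Y1d1 Y0 Y1 : Ω → ℝ) (X : Ω → 𝓧)
    (hDmeas : Measurable D) (hXmeas : Measurable X)
    (hDbin : ∀ ω, D ω = 0 ∨ D ω = 1)
    (hY0d0int : Integrable Y0d0 μ)
    (hY1d0int : Integrable Y1d0 μ) (hY1d1int : Integrable Y1d1 μ)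
    -- observational rule
    (hY0 : ∀ ω, Y0 ω = D ω * Y0d1 ω + (1 - D ω) * Y0d0 ω)
    (hY1 : ∀ ω, Y1 ω = D ω * Y1d1 ω + (1 - D ω) * Y1d0 ω)
    -- no anticipation assumption
    (hNA : Y0d1 =ᵐ[μ] Y0d0)
    -- conditional common trends: a common measurable function of X is a version of
    -- E[Y₁(0) − Y₀(0) | X, D=1] and of E[Y₁(0) − Y₀(0) | X, D=0]
    (mct : 𝓧 → ℝ) (hmct : Measurable mct)
    (hCT1 : (fun ω => mct (X ω)) =ᵐ[μ[|{ω | D ω = 1}]]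
      MeasureTheory.condExp (MeasurableSpace.comap X inferInstance)
        (μ[|{ω | D ω = 1}]) (fun ω => Y1d0 ω - Y0d0 ω))
    (hCT0 : (fun ω => mct (X ω)) =ᵐ[μ[|{ω | D ω = 0}]]
      MeasureTheory.condExp (MeasurableSpace.comap X inferInstance)
        (μ[|{ω | D ω = 0}]) (fun ω => Y1d0 ω - Y0d0 ω))
    -- m1 and m0 are versions of E[Y₁ | X, D=0] and E[Y₀ | X, D=0]
    (m1 m0 : 𝓧 → ℝ) (hm1meas : Measurable m1) (hm0meas : Measurable m0)
    (hm1 : (fun ω => m1 (X ω)) =ᵐ[μ[|{ω | D ω = 0}]]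
      MeasureTheory.condExp (MeasurableSpace.comap X inferInstance)
        (μ[|{ω | D ω = 0}]) Y1)
    (hm0 : (fun ω => m0 (X ω)) =ᵐ[μ[|{ω | D ω = 0}]]
      MeasureTheory.condExp (MeasurableSpace.comap X inferInstance)
        (μ[|{ω | D ω = 0}]) Y0)
    -- common support: P(D=1 | X) < 1 almost surely
    (p : 𝓧 → ℝ)
    (hpVer : (fun ω => p (X ω)) =ᵐ[μ]
      MeasureTheory.condExp (MeasurableSpace.comap X inferInstance) μ D)
    (hCS : ∀ᵐ ω ∂μ, p (X ω) < 1) :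
    -- the ATET is identified by covariate-adjusted DiD
    ∫ ω, (Y1d1 ω - Y1d0 ω) ∂(μ[|{ω | D ω = 1}]) =
      ∫ ω, Y1 ω ∂(μ[|{ω | D ω = 1}]) - ∫ ω, Y0 ω ∂(μ[|{ω | D ω = 1}]) -
      ∫ ω, (m1 (X ω) - m0 (X ω)) ∂(μ[|{ω | D ω = 1}]) := by
  set A : Set Ω := {ω | D ω = 1}
  have hA : MeasurableSet A := hDmeas (measurableSet_singleton 1)
  have hAc : {ω | D ω = 0} = Aᶜ := by
    ext ω; rcases hDbin ω with h | h <;> simp [A, h]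
  have hDA : D = A.indicator 1 := by
    ext ω; rcases hDbin ω with h | h <;> simp [A, h]
  rw [hAc] at hCT0 hm1 hm0
  have hY1A : Y1 =ᵐ[μ[|A]] Y1d1 :=
    ae_cond_of_forall_mem hA fun ω (h : D ω = 1) => by simp [hY1 ω, h]
  have hY0A : Y0 =ᵐ[μ[|A]] Y0d0 := by
    filter_upwards [ae_cond_mem hA, cond_absolutelyContinuous.ae_le hNA] with ω h hna
    simp [hY0 ω, show D ω = 1 from h, hna]
  have hY1Ac : Y1 =ᵐ[μ[|Aᶜ]] Y1d0 := ae_cond_of_forall_mem hA.compl fun ω h => by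
    simp [hY1 ω, (hDbin ω).resolve_right h]
  have hY0Ac : Y0 =ᵐ[μ[|Aᶜ]] Y0d0 := ae_cond_of_forall_mem hA.compl fun ω h => by
    simp [hY0 ω, (hDbin ω).resolve_right h]
  have hcontrol : ∀ᵐ ω ∂μ[|Aᶜ], m1 (X ω) - m0 (X ω) = mct (X ω) :=
    ((sub_ae_eq_condExp_sub ((hY1d0int.cond _).congr hY1Ac.symm)
      ((hY0d0int.cond _).congr hY0Ac.symm) hm1 hm0).trans
        (condExp_congr_ae (hY1Ac.sub hY0Ac))).trans hCT0.symm
  have hac : (μ[|A]).map X ≪ (μ[|Aᶜ]).map X := by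
    refine map_cond_absolutelyContinuous_map_cond_compl_of_condExp_lt_one hXmeas hA ?_
    filter_upwards [hpVer, hCS] with ω hp h
    rwa [← hDA, ← hp]
  have htreated : ∀ᵐ ω ∂μ[|A], m1 (X ω) - m0 (X ω) = mct (X ω) :=
    ae_comp_of_map_absolutelyContinuous hXmeas hac
      (measurableSet_eq_fun (hm1meas.sub hm0meas) hmct) hcontrol
  rw [integral_congr_ae hY1A, integral_congr_ae hY0A, integral_congr_ae htreated,
    integral_congr_ae hCT1, integral_condExp hXmeas.comap_le,
    integral_sub (hY1d1int.cond _) (hY1d0int.cond _),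
    integral_sub (hY1d0int.cond _) (hY0d0int.cond _)]
  ring

/-- Under the conditional common trend assumption given covariates `X`,
no anticipation, and common support, the ATET is identified by the
covariate-adjusted difference-in-differences. -/
theorem conditional_did_identifies_atet
    {Ω 𝓧 : Type*} [MeasurableSpace Ω] [MeasurableSpace 𝓧]
    (μ : Measure Ω) [IsProbabilityMeasure μ]
    (D Y0d0 Y0d1 Y1d0 Y1d1 Y0 Y1 : Ω → ℝ) (X : Ω → 𝓧)
    (hDmeas : Measurable D) (hXmeas : Measurable X)
    (hDbin : ∀ ω, D ω = 0 ∨ D ω = 1)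
    (hD1pos : 0 < μ {ω | D ω = 1})
    (hD1lt : μ {ω | D ω = 1} < 1)
    (hY0d0int : Integrable Y0d0 μ) (hY0d1int : Integrable Y0d1 μ)
    (hY1d0int : Integrable Y1d0 μ) (hY1d1int : Integrable Y1d1 μ)
    -- observational rule
    (hY0 : ∀ ω, Y0 ω = D ω * Y0d1 ω + (1 - D ω) * Y0d0 ω)
    (hY1 : ∀ ω, Y1 ω = D ω * Y1d1 ω + (1 - D ω) * Y1d0 ω)
    -- no anticipation assumption
    (hNA : Y0d1 =ᵐ[μ] Y0d0)
    -- conditional common trends: a common measurable function of X is a version of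
    -- E[Y₁(0) − Y₀(0) | X, D=1] and of E[Y₁(0) − Y₀(0) | X, D=0]
    (mct : 𝓧 → ℝ) (hmct : Measurable mct)
    (hCT1 : (fun ω => mct (X ω)) =ᵐ[μ[|{ω | D ω = 1}]]
      MeasureTheory.condExp (MeasurableSpace.comap X inferInstance)
        (μ[|{ω | D ω = 1}]) (fun ω => Y1d0 ω - Y0d0 ω))
    (hCT0 : (fun ω => mct (X ω)) =ᵐ[μ[|{ω | D ω = 0}]]
      MeasureTheory.condExp (MeasurableSpace.comap X inferInstance)
        (μ[|{ω | D ω = 0}]) (fun ω => Y1d0 ω - Y0d0 ω))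
    -- m1 and m0 are versions of E[Y₁ | X, D=0] and E[Y₀ | X, D=0]
    (m1 m0 : 𝓧 → ℝ) (hm1meas : Measurable m1) (hm0meas : Measurable m0)
    (hm1 : (fun ω => m1 (X ω)) =ᵐ[μ[|{ω | D ω = 0}]]
      MeasureTheory.condExp (MeasurableSpace.comap X inferInstance)
        (μ[|{ω | D ω = 0}]) Y1)
    (hm0 : (fun ω => m0 (X ω)) =ᵐ[μ[|{ω | D ω = 0}]]
      MeasureTheory.condExp (MeasurableSpace.comap X inferInstance)
        (μ[|{ω | D ω = 0}]) Y0)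
    (hm1int : Integrable (fun ω => m1 (X ω)) (μ[|{ω | D ω = 1}]))
    (hm0int : Integrable (fun ω => m0 (X ω)) (μ[|{ω | D ω = 1}]))
    -- common support: P(D=1 | X) < 1 almost surely
    (p : 𝓧 → ℝ) (hpmeas : Measurable p)
    (hpVer : (fun ω => p (X ω)) =ᵐ[μ]
      MeasureTheory.condExp (MeasurableSpace.comap X inferInstance) μ D)
    (hCS : ∀ᵐ ω ∂μ, p (X ω) < 1) :
    -- the ATET is identified by covariate-adjusted DiD
    ∫ ω, (Y1d1 ω - Y1d0 ω) ∂(μ[|{ω | D ω = 1}]) =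
      ∫ ω, Y1 ω ∂(μ[|{ω | D ω = 1}]) - ∫ ω, Y0 ω ∂(μ[|{ω | D ω = 1}]) -
      ∫ ω, (m1 (X ω) - m0 (X ω)) ∂(μ[|{ω | D ω = 1}]) :=
  conditional_did_identifies_atet_general μ D Y0d0 Y0d1 Y1d0 Y1d1 Y0 Y1 X hDmeas hXmeas hDbin
    hY0d0int hY1d0int hY1d1int hY0 hY1 hNA mct hmct hCT1 hCT0 m1 m0 hm1meas hm0meas hm1 hm0 p hpVer
    hCS
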